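/- arXiv:2010.09156 — 5 statements merged into one kernel-verified Lean document; each statement's English description precedes it below -/
import Mathlib

section
/- For any real sequence (c_n) with ∑ c_n² = 1 and ∑ n c_n² = N (N > 0), one has ∑_n c_{n+1} c_n √(n+1) ≤ √N, with equality attained by the coherent state coefficients c_n = e^{-N/2} N^{n/2}/√(n!). -/
/-- Coherent state Fock coefficients with mean photon number N. -/
noncomputable def cohCoeffN (N : ℝ) (n : ℕ) : ℝ :=
  Real.exp (-N / 2) * N ^ ((n : ℝ) / 2) / Real.sqrt (Nat.factorial n)

/-!
Write γ = ∑ (√(n+1) c_{n+1}) c_n. By Cauchy–Schwarz, γ² ≤ ∑ (n+1) c_{n+1}² · ∑ c_n², and after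
shifting the index the first factor is ∑ n c_n² = N while the second is 1.

For the coherent state α_n = e^{-N/2} N^{n/2} / √(n!) one has √(n+1) α_{n+1} = √N α_n, so
γ = √N ∑ α_n², and α_n² are the Poisson weights, which sum to 1.
-/

open Real ProbabilityTheory
open scoped Nat

theorem Real.tsum_mul_le_sqrt_mul_sqrt {ι : Type*} {f g : ι → ℝ}
    (hf : Summable fun i => f i ^ 2) (hg : Summable fun i => g i ^ 2) :
    ∑' i, f i * g i ≤ √(∑' i, f i ^ 2) * √(∑' i, g i ^ 2) :=
  tsum_le_of_sum_le' (by positivity) fun s =>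
    (sum_mul_le_sqrt_mul_sqrt s f g).trans <| by
      gcongr
      · exact hf.sum_le_tsum s fun i _ => sq_nonneg _
      · exact hg.sum_le_tsum s fun i _ => sq_nonneg _

theorem hasSum_sqrt_succ_mul_succ_sq {c : ℕ → ℝ}
    (hen : Summable fun n : ℕ => (n : ℝ) * c n ^ 2) :
    HasSum (fun n : ℕ => (√(n + 1) * c (n + 1)) ^ 2) (∑' n : ℕ, (n : ℝ) * c n ^ 2) := by
  have hterm (n : ℕ) : (√(n + 1) * c (n + 1)) ^ 2 = ((n + 1 : ℕ) : ℝ) * c (n + 1) ^ 2 := by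
    rw [mul_pow, sq_sqrt (by positivity), Nat.cast_succ]
  simpa [hterm] using (hasSum_nat_add_iff' 1).mpr hen.hasSum

theorem cohCoeffN_sq {N : ℝ} (hN : 0 ≤ N) (n : ℕ) :
    cohCoeffN N n ^ 2 = exp (-N) * N ^ n / n ! := by
  rw [cohCoeffN, div_pow, mul_pow, sq_sqrt (by positivity), ← exp_nat_mul, ← rpow_natCast _ 2,
    ← rpow_mul hN]
  norm_num [mul_div_cancel₀]

theorem hasSum_cohCoeffN_sq {N : ℝ} (hN : 0 ≤ N) : HasSum (fun n => cohCoeffN N n ^ 2) 1 := by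
  simp only [cohCoeffN_sq hN]
  exact hasSum_one_poissonMeasure ⟨N, hN⟩

theorem cohCoeffN_succ_mul_sqrt {N : ℝ} (hN : 0 ≤ N) (n : ℕ) :
    cohCoeffN N (n + 1) * √(n + 1) = √N * cohCoeffN N n := by
  have hpow : N ^ (((n + 1 : ℕ) : ℝ) / 2) = N ^ ((n : ℝ) / 2) * √N := by
    rw [sqrt_eq_rpow, ← rpow_add' hN (by positivity)]
    push_cast
    ring_nf
  have hfac : √((n + 1)! : ℝ) = √(n + 1) * √(n ! : ℝ) := by
    rw [Nat.factorial_succ, Nat.cast_mul, sqrt_mul (by positivity)]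
    push_cast
    rfl
  rw [cohCoeffN, cohCoeffN, hpow, hfac]
  field_simp

theorem hasSum_cohCoeffN_gamma {N : ℝ} (hN : 0 ≤ N) :
    HasSum (fun n : ℕ => cohCoeffN N (n + 1) * cohCoeffN N n * √(n + 1)) √N := by
  have hterm (n : ℕ) :
      cohCoeffN N (n + 1) * cohCoeffN N n * √(n + 1) = √N * cohCoeffN N n ^ 2 := by
    rw [mul_right_comm, cohCoeffN_succ_mul_sqrt hN]
    ring
  simpa only [hterm, mul_one] using (hasSum_cohCoeffN_sq hN).mul_left √N

theorem gamma_le_sqrt_energy_general (N : ℝ) (hN : 0 < N) (c : ℕ → ℝ)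
    (hsq : Summable fun n : ℕ => (c n) ^ 2)
    (hen : Summable fun n : ℕ => (n : ℝ) * (c n) ^ 2)
    (hnorm : (∑' n : ℕ, (c n) ^ 2) = 1)
    (henergy : (∑' n : ℕ, (n : ℝ) * (c n) ^ 2) = N) :
    (∑' n : ℕ, c (n + 1) * c n * Real.sqrt (n + 1)) ≤ Real.sqrt N ∧
    (∑' n : ℕ, cohCoeffN N (n + 1) * cohCoeffN N n * Real.sqrt (n + 1))
      = Real.sqrt N := by
  refine ⟨?_, (hasSum_cohCoeffN_gamma hN.le).tsum_eq⟩
  have hshift := hasSum_sqrt_succ_mul_succ_sq hen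
  rw [henergy] at hshift
  calc ∑' n : ℕ, c (n + 1) * c n * √(n + 1)
      = ∑' n : ℕ, √(n + 1) * c (n + 1) * c n := by congr! 2 with n; ring
    _ ≤ √(∑' n : ℕ, (√(n + 1) * c (n + 1)) ^ 2) * √(∑' n : ℕ, c n ^ 2) :=
      tsum_mul_le_sqrt_mul_sqrt hshift.summable hsq
    _ = √N := by rw [hshift.tsum_eq, hnorm, sqrt_one, mul_one]

/-- Among real sequences with unit norm and mean photon number N > 0,
    γ = ∑ c_{n+1} c_n √(n+1) is at most √N, with equality for the coherent state. -/
theorem gamma_le_sqrt_energy (N : ℝ) (hN : 0 < N) (c : ℕ → ℝ)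
    (hsq : Summable fun n : ℕ => (c n) ^ 2)
    (hen : Summable fun n : ℕ => (n : ℝ) * (c n) ^ 2)
    (hnorm : (∑' n : ℕ, (c n) ^ 2) = 1)
    (henergy : (∑' n : ℕ, (n : ℝ) * (c n) ^ 2) = N)
    (hγ : Summable fun n : ℕ => c (n + 1) * c n * Real.sqrt (n + 1)) :
    (∑' n : ℕ, c (n + 1) * c n * Real.sqrt (n + 1)) ≤ Real.sqrt N ∧
    (∑' n : ℕ, cohCoeffN N (n + 1) * cohCoeffN N n * Real.sqrt (n + 1))
      = Real.sqrt N :=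
  gamma_le_sqrt_energy_general N hN c hsq hen hnorm henergy
end

section
/- The function M(x,y) = 4xy/(√x + √y)² is jointly concave on (0,∞)². -/
/-!
`M` is positively homogeneous of degree one, so by Euler's identity it agrees at each point `q`
with the linear functional `∇M(q)`. If moreover `M ≤ ∇M(q)` everywhere, `M` is an infimum of
linear functionals and hence concave. Substituting `x = u², y = v², a = s², b = t²` turns this
tangent-plane inequality into the polynomial inequality `(s+t)³u²v² ≤ (t³u² + s³v²)(u+v)²`.
-/

open Real

theorem concaveOn_of_le_linearMap {𝕜 E : Type*} [Field 𝕜] [LinearOrder 𝕜] [IsStrictOrderedRing 𝕜]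
    [AddCommGroup E] [Module 𝕜 E] {s : Set E} {f : E → 𝕜} (hs : Convex 𝕜 s)
    (L : E → E →ₗ[𝕜] 𝕜) (hle : ∀ q ∈ s, ∀ p ∈ s, f p ≤ L q p) (heq : ∀ q ∈ s, f q = L q q) :
    ConcaveOn 𝕜 s f := by
  refine ⟨hs, fun x hx y hy a b ha hb hab => ?_⟩
  have hz := hs hx hy ha hb hab
  calc a • f x + b • f y ≤ a • L _ x + b • L _ y := by
        gcongr
        exacts [hle _ hz x hx, hle _ hz y hy]
    _ = f (a • x + b • y) := by rw [heq _ hz, map_add, map_smul, map_smul]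

noncomputable def meanM (x y : ℝ) : ℝ := 4 * x * y / (√x + √y) ^ 2

noncomputable def meanMGrad (a b : ℝ) : ℝ × ℝ →ₗ[ℝ] ℝ :=
  (4 / (√a + √b) ^ 3) • (√b ^ 3 • LinearMap.fst ℝ ℝ ℝ + √a ^ 3 • LinearMap.snd ℝ ℝ ℝ)

lemma meanMGrad_apply (a b x y : ℝ) :
    meanMGrad a b (x, y) = 4 * (√b ^ 3 * x + √a ^ 3 * y) / (√a + √b) ^ 3 := by
  simp only [meanMGrad, LinearMap.smul_apply, LinearMap.add_apply, LinearMap.fst_apply,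
    LinearMap.snd_apply, smul_eq_mul]
  ring

lemma four_mul_sq_mul_sq_div_le {s t u v : ℝ} (hs : 0 < s) (ht : 0 < t) (hu : 0 < u)
    (hv : 0 < v) :
    4 * u ^ 2 * v ^ 2 / (u + v) ^ 2 ≤ 4 * (t ^ 3 * u ^ 2 + s ^ 3 * v ^ 2) / (s + t) ^ 3 := by
  rw [div_le_div_iff₀ (by positivity) (by positivity)]
  nlinarith [mul_nonneg (mul_nonneg (sq_nonneg (s * v - t * u))
      (by positivity : (0:ℝ) ≤ 2 * s * v + t * u)) hu.le,
    mul_nonneg (mul_nonneg (sq_nonneg (t * u - s * v))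
      (by positivity : (0:ℝ) ≤ 2 * t * u + s * v)) hv.le]

lemma meanM_le_meanMGrad {a b x y : ℝ} (ha : 0 < a) (hb : 0 < b) (hx : 0 < x) (hy : 0 < y) :
    meanM x y ≤ meanMGrad a b (x, y) := by
  have h := four_mul_sq_mul_sq_div_le (sqrt_pos.2 ha) (sqrt_pos.2 hb) (sqrt_pos.2 hx)
    (sqrt_pos.2 hy)
  rwa [sq_sqrt hx.le, sq_sqrt hy.le, mul_assoc 4 x, ← mul_assoc, ← meanM, ← meanMGrad_apply]
    at h

lemma meanMGrad_apply_self {a b : ℝ} (ha : 0 < a) (hb : 0 < b) :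
    meanMGrad a b (a, b) = meanM a b := by
  have hsa : √a ^ 2 = a := sq_sqrt ha.le
  have hsb : √b ^ 2 = b := sq_sqrt hb.le
  rw [meanMGrad_apply, meanM, div_eq_div_iff (by positivity) (by positivity)]
  linear_combination (4 * (√a + √b) ^ 2 * √b * a) * hsb + (4 * (√a + √b) ^ 2 * √a * b) * hsa

/-- M(x,y) = 4xy/(√x+√y)² is jointly concave on (0,∞)². -/
theorem meanM_concave :
    ConcaveOn ℝ (Set.Ioi (0 : ℝ) ×ˢ Set.Ioi (0 : ℝ))
      (fun p : ℝ × ℝ => 4 * p.1 * p.2 / (Real.sqrt p.1 + Real.sqrt p.2) ^ 2) := by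
  refine concaveOn_of_le_linearMap (f := fun p => meanM p.1 p.2)
    ((convex_Ioi 0).prod (convex_Ioi 0)) (fun q => meanMGrad q.1 q.2) ?_ ?_
  · rintro ⟨a, b⟩ ⟨ha, hb⟩ ⟨x, y⟩ ⟨hx, hy⟩
    exact meanM_le_meanMGrad ha hb hx hy
  · rintro ⟨a, b⟩ ⟨ha, hb⟩
    exact (meanMGrad_apply_self ha hb).symm
end

section
/- For all n_p > 0 and n_e > 0, the quantum advantage ratio [(1 + n_e + √(n_e(1+n_e))) / (1 + n_e + √(n_p n_e (1+n_e)/(1+n_p)))]² is strictly greater than 1 and at most 4. -/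
/-! The ratio has the form `((c + a) / (c + b)) ^ 2` with `c = 1 + nₑ`, `a = √(nₑ(1 + nₑ))` and
`b = √(nₚ/(1 + nₚ) · nₑ(1 + nₑ))`. Since `nₚ/(1 + nₚ) < 1` we get `0 ≤ b < a`, and since
`nₑ(1 + nₑ) < (1 + nₑ)²` we get `a < c`; hence `1 < (c + a)/(c + b) ≤ 2c/c = 2`. -/

lemma one_lt_add_div_add_sq {a b c : ℝ} (hcb : 0 < c + b) (hba : b < a) :
    1 < ((c + a) / (c + b)) ^ 2 :=
  one_lt_pow₀ ((one_lt_div hcb).2 (by linarith)) two_ne_zero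

lemma add_div_add_sq_le_four {a b c : ℝ} (hb : 0 ≤ b) (ha : 0 ≤ a) (hac : a ≤ c)
    (hcb : 0 < c + b) : ((c + a) / (c + b)) ^ 2 ≤ 4 := by
  have hle : (c + a) / (c + b) ≤ 2 := (div_le_iff₀ hcb).2 (by linarith)
  calc ((c + a) / (c + b)) ^ 2 ≤ 2 ^ 2 := pow_le_pow_left₀ (div_nonneg (by linarith) hcb.le) hle 2
    _ = 4 := by norm_num

lemma Real.sqrt_mul_div_one_add_lt {t x : ℝ} (ht : 0 ≤ t) (hx : 0 < x) :
    √(t * x / (1 + t)) < √x :=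
  Real.sqrt_lt_sqrt (by positivity) ((div_lt_iff₀ (by positivity)).2 (by nlinarith))

lemma Real.sqrt_mul_one_add_lt {x : ℝ} (hx : 0 ≤ x) : √(x * (1 + x)) < 1 + x :=
  (Real.sqrt_lt' (by positivity)).2 (by nlinarith)

/-- The quantum advantage ratio is strictly greater than 1 and at most 4. -/
theorem quantum_advantage_bounds (np ne : ℝ) (hnp : 0 < np) (hne : 0 < ne) :
    1 < ((1 + ne + Real.sqrt (ne * (1 + ne)))
          / (1 + ne + Real.sqrt (np * ne * (1 + ne) / (1 + np)))) ^ 2 ∧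
    ((1 + ne + Real.sqrt (ne * (1 + ne)))
          / (1 + ne + Real.sqrt (np * ne * (1 + ne) / (1 + np)))) ^ 2 ≤ 4 := by
  have hba : √(np * ne * (1 + ne) / (1 + np)) < √(ne * (1 + ne)) := by
    rw [mul_assoc]
    exact Real.sqrt_mul_div_one_add_lt hnp.le (by positivity)
  have hcb : 0 < 1 + ne + √(np * ne * (1 + ne) / (1 + np)) := by positivity
  exact ⟨one_lt_add_div_add_sq hcb hba,
    add_div_add_sq_le_four (Real.sqrt_nonneg _) (Real.sqrt_nonneg _)
      (Real.sqrt_mul_one_add_lt hne.le).le hcb⟩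
end

section
/- The quantum advantage ratio R(n_p, n_e) = [(1 + n_e + √(n_e(1+n_e)))/(1 + n_e + √(n_p n_e(1+n_e)/(1+n_p)))]² tends to 4 in the iterated limit n_p → 0⁺ followed by n_e → ∞, and tends to 1 as n_p → ∞ for any fixed n_e > 0, and equals 1 when n_e = 0. -/
/-!
As `n_p → 0⁺` the ratio is continuous, so the inner limit is `R(0, n_e)`, and
`R(0, n_e) = (1 + √(n_e / (1 + n_e)))²`, which tends to `(1 + 1)² = 4`. As `n_p → ∞`,
`n_p / (1 + n_p) → 1`, so the denominator tends to the numerator.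
-/

open Filter Topology

/-- The quantum advantage ratio. -/
noncomputable def qaR (np ne : ℝ) : ℝ :=
  ((1 + ne + Real.sqrt (ne * (1 + ne)))
    / (1 + ne + Real.sqrt (np * ne * (1 + ne) / (1 + np)))) ^ 2

theorem tendsto_div_const_add_atTop (c : ℝ) :
    Tendsto (fun x : ℝ => x / (c + x)) atTop (𝓝 1) := by
  have hshift : Tendsto (fun x : ℝ => c + x) atTop atTop :=
    tendsto_atTop_add_const_left _ c tendsto_id
  have hlim : Tendsto (fun x : ℝ => 1 - c / (c + x)) atTop (𝓝 (1 - 0)) :=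
    tendsto_const_nhds.sub (tendsto_const_nhds.div_atTop hshift)
  rw [sub_zero] at hlim
  refine hlim.congr' ?_
  filter_upwards [hshift.eventually_gt_atTop 0] with x hx
  field_simp
  ring

theorem qaR_zero_left (ne : ℝ) :
    qaR 0 ne = ((1 + ne + Real.sqrt (ne * (1 + ne))) / (1 + ne)) ^ 2 := by
  simp [qaR]

theorem qaR_zero_right (np : ℝ) : qaR np 0 = 1 := by
  simp [qaR]

theorem continuousAt_qaR {np ne : ℝ} (hnp : np ≠ -1) (hne : 0 ≤ ne) :
    ContinuousAt (fun np => qaR np ne) np := by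
  have hden : 1 + np ≠ 0 := fun h => hnp (by linarith)
  unfold qaR
  refine ContinuousAt.pow (continuousAt_const.div ?_ (by positivity)) 2
  exact continuousAt_const.add <|
    Real.continuous_sqrt.continuousAt.comp ((by fun_prop : Continuous _).continuousAt.div
      (by fun_prop) hden)

theorem one_add_add_sqrt_div_one_add {ne : ℝ} (hne : 0 ≤ ne) :
    (1 + ne + Real.sqrt (ne * (1 + ne))) / (1 + ne) = 1 + Real.sqrt (ne / (1 + ne)) := by
  have hpos : 0 < 1 + ne := by linarith
  have hsq : Real.sqrt (1 + ne) ^ 2 = 1 + ne := Real.sq_sqrt hpos.le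
  rw [Real.sqrt_mul hne, Real.sqrt_div hne]
  field_simp
  linear_combination Real.sqrt ne * hsq

theorem tendsto_qaR_nhdsGT_zero {ne : ℝ} (hne : 0 ≤ ne) :
    Tendsto (fun np => qaR np ne) (𝓝[>] 0) (𝓝 (qaR 0 ne)) :=
  (continuousAt_qaR (by norm_num) hne).tendsto.mono_left nhdsWithin_le_nhds

theorem tendsto_qaR_zero_left_atTop :
    Tendsto (fun ne => qaR 0 ne) atTop (𝓝 4) := by
  have hsqrt : Tendsto (fun ne : ℝ => Real.sqrt (ne / (1 + ne))) atTop (𝓝 1) := by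
    simpa using (tendsto_div_const_add_atTop 1).sqrt
  have hlim : Tendsto (fun ne : ℝ => (1 + Real.sqrt (ne / (1 + ne))) ^ 2) atTop (𝓝 4) := by
    convert ((tendsto_const_nhds (x := (1 : ℝ))).add hsqrt).pow 2
    norm_num
  refine hlim.congr' ?_
  filter_upwards [eventually_ge_atTop 0] with ne hne
  rw [qaR_zero_left, one_add_add_sqrt_div_one_add hne]

theorem tendsto_qaR_atTop {ne : ℝ} (hne : 0 ≤ ne) :
    Tendsto (fun np => qaR np ne) atTop (𝓝 1) := by
  set S := Real.sqrt (ne * (1 + ne))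
  have hnum : 0 < 1 + ne + S := by positivity
  have hinner : Tendsto (fun np : ℝ => np * ne * (1 + ne) / (1 + np)) atTop
      (𝓝 (ne * (1 + ne))) := by
    have h := (tendsto_div_const_add_atTop 1).const_mul (ne * (1 + ne))
    rw [mul_one] at h
    exact h.congr fun np => by ring
  have hden : Tendsto (fun np : ℝ => 1 + ne + Real.sqrt (np * ne * (1 + ne) / (1 + np)))
      atTop (𝓝 (1 + ne + S)) :=
    tendsto_const_nhds.add ((Real.continuous_sqrt.tendsto _).comp hinner)
  have h := ((tendsto_const_nhds (x := 1 + ne + S)).div hden hnum.ne').pow 2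
  rwa [div_self hnum.ne', one_pow] at h

/-- R → 4 in the iterated limit n_p → 0⁺ then n_e → ∞; R → 1 as n_p → ∞ for
    fixed n_e > 0; and R = 1 when n_e = 0. -/
theorem quantum_advantage_limits :
    (∀ ne : ℝ, 0 < ne →
      Tendsto (fun np => qaR np ne) (𝓝[>] 0)
        (𝓝 (((1 + ne + Real.sqrt (ne * (1 + ne))) / (1 + ne)) ^ 2))) ∧
    Tendsto (fun ne : ℝ => ((1 + ne + Real.sqrt (ne * (1 + ne))) / (1 + ne)) ^ 2)
      atTop (𝓝 4) ∧
    (∀ ne : ℝ, 0 < ne → Tendsto (fun np => qaR np ne) atTop (𝓝 1)) ∧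
    (∀ np : ℝ, qaR np 0 = 1) := by
  simp only [← qaR_zero_left]
  exact ⟨fun ne hne => tendsto_qaR_nhdsGT_zero hne.le, tendsto_qaR_zero_left_atTop,
    fun ne hne => tendsto_qaR_atTop hne.le, qaR_zero_right⟩
end

section
/- The quantum advantage ratio R(n_p, n_e) = [(1+n_e+√(n_e(1+n_e)))/(1+n_e+√(n_p n_e(1+n_e)/(1+n_p)))]² is strictly decreasing in n_p for fixed n_e > 0. -/
/-! The ratio is `(N / (c + √(k · n_p / (1 + n_p))))²` with constants `N, c, k > 0`. Since
`x ↦ x / (1 + x)` and `√` are strictly increasing while `t ↦ (N / (c + t))²` is strictly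
decreasing for `t > -c`, the composite is strictly decreasing. -/

open Set

lemma strictMonoOn_mul_div_one_add {k : ℝ} (hk : 0 < k) :
    StrictMonoOn (fun x : ℝ => x * k / (1 + x)) (Ioi (-1)) := by
  intro a ha b hb hab
  rw [mem_Ioi] at ha hb
  rw [div_lt_div_iff₀ (by linarith) (by linarith)]
  nlinarith

lemma strictAntiOn_sq_div_add {N c : ℝ} (hN : 0 < N) :
    StrictAntiOn (fun t : ℝ => (N / (c + t)) ^ 2) (Ioi (-c)) := by
  intro a ha b hb hab
  rw [mem_Ioi] at ha hb
  have hb' : 0 < c + b := by linarith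
  exact pow_lt_pow_left₀ (div_lt_div_of_pos_left hN (by linarith) (by linarith))
    (div_pos hN hb').le two_ne_zero

/-- The quantum advantage ratio is strictly decreasing in the probe energy. -/
theorem quantum_advantage_antitone (ne : ℝ) (hne : 0 < ne) :
    StrictAntiOn
      (fun np : ℝ =>
        ((1 + ne + Real.sqrt (ne * (1 + ne)))
          / (1 + ne + Real.sqrt (np * ne * (1 + ne) / (1 + np)))) ^ 2)
      (Set.Ioi 0) := by
  have hk : 0 < ne * (1 + ne) := by positivity
  have hratio : StrictMonoOn (fun np : ℝ => np * ne * (1 + ne) / (1 + np)) (Ioi 0) := by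
    simpa only [mul_assoc] using
      (strictMonoOn_mul_div_one_add hk).mono (Ioi_subset_Ioi (by norm_num))
  have hratio_nonneg : MapsTo (fun np : ℝ => np * ne * (1 + ne) / (1 + np)) (Ioi 0) (Ici 0) :=
    fun np hnp => by rw [mem_Ioi] at hnp; rw [mem_Ici]; positivity
  have hsqrt_gt : MapsTo (fun np : ℝ => Real.sqrt (np * ne * (1 + ne) / (1 + np))) (Ioi 0)
      (Ioi (-(1 + ne))) :=
    fun np _ => by rw [mem_Ioi]; linarith [Real.sqrt_nonneg (np * ne * (1 + ne) / (1 + np))]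
  have hN : 0 < 1 + ne + Real.sqrt (ne * (1 + ne)) := by positivity
  exact (strictAntiOn_sq_div_add hN).comp_strictMonoOn
    (Real.strictMonoOn_sqrt.comp hratio hratio_nonneg) hsqrt_gt
end
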